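/- arXiv:1806.08693 — 2 statements merged into one kernel-verified Lean document; each statement's English description precedes it below -/
import Mathlib

section
/- For every integer s ≥ 2, the embedded pair consisting of the SSPERK(s,2) coefficient matrix A together with the embedded weights b̃₂ = ((s+1)/s², 1/s, …, 1/s, (s−1)/s²)ᵀ satisfies the SSP conditions at parameter r = s − 1: with K̃ = [[A, 0], [b̃₂ᵀ, 0]] ∈ ℝ^{(s+1)×(s+1)}, every entry of K̃(I + (s−1)K̃)^{-1} is nonnegative and every component of (s−1)·K̃(I + (s−1)K̃)^{-1}e is at most 1. Hence the embedded method has SSP coefficient at least s − 1. -/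
/-!
For `r = s - 1` the coefficient matrix is `A = r⁻¹ • L` with `L` the strictly lower triangular
all-ones matrix, and `(1 - N) * (1 + L) = 1` for the subdiagonal shift `N`. Hence
`K * (1 + r • K)⁻¹ = [[r⁻¹ • N, 0], [dᵀ, 0]]`, where `d = w ᵥ* (1 - N)` is the vector of forward
differences of the weights `w`. It is nonnegative because the weights decrease, and it telescopes
to `w₀`, so the row sums of `r • K * (1 + r • K)⁻¹` are `0` or `1` in the first `s` rows and
`r w₀ = (s² - 1) / s²` in the last.
-/

open Matrix

def mkK {s : ℕ} (A : Matrix (Fin s) (Fin s) ℝ) (w : Fin s → ℝ) :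
    Matrix (Fin (s + 1)) (Fin (s + 1)) ℝ :=
  Matrix.of fun i j =>
    if hj : (j : ℕ) < s then
      if hi : (i : ℕ) < s then A ⟨i, hi⟩ ⟨j, hj⟩ else w ⟨j, hj⟩
    else 0

theorem isUnit_det_one_add_smul {n : Type*} [Fintype n] [DecidableEq n] [LinearOrder n]
    {R : Type*} [CommRing R] (K : Matrix n n R) (hK : ∀ i j, i ≤ j → K i j = 0) (r : R) :
    IsUnit (1 + r • K).det := by
  have hlow : (1 + r • K).IsLowerTriangular := fun i j hij => by
    have hij' : i < j := OrderDual.toDual_lt_toDual.mp hij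
    simp [one_apply_ne hij'.ne, hK i j hij'.le]
  rw [det_of_isLowerTriangular _ hlow]
  simp [hK _ _ le_rfl]

section mkK

variable {s : ℕ} (A B : Matrix (Fin s) (Fin s) ℝ) (w v : Fin s → ℝ)

@[simp]
theorem mkK_castSucc_castSucc (i j : Fin s) : mkK A w i.castSucc j.castSucc = A i j := by
  simp [mkK]

@[simp]
theorem mkK_last_castSucc (j : Fin s) : mkK A w (Fin.last s) j.castSucc = w j := by
  simp [mkK]

@[simp]
theorem mkK_apply_last (i : Fin (s + 1)) : mkK A w i (Fin.last s) = 0 := by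
  simp [mkK]

theorem mkK_apply_eq_zero_of_le (hA : ∀ i j, i ≤ j → A i j = 0) {i j : Fin (s + 1)}
    (hij : i ≤ j) : mkK A w i j = 0 := by
  induction j using Fin.lastCases with
  | last => simp
  | cast j =>
    induction i using Fin.lastCases with
    | last => exact absurd hij (by simp [Fin.le_def])
    | cast i => simpa using hA i j (by simpa using hij)

theorem mkK_nonneg (hA : ∀ i j, 0 ≤ A i j) (hw : ∀ j, 0 ≤ w j) (i j : Fin (s + 1)) :
    0 ≤ mkK A w i j := by
  induction j using Fin.lastCases with
  | last => simp
  | cast j =>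
    induction i using Fin.lastCases with
    | last => simpa using hw j
    | cast i => simpa using hA i j

theorem mkK_add : mkK A w + mkK B v = mkK (A + B) (w + v) := by
  ext i j
  induction j using Fin.lastCases <;> induction i using Fin.lastCases <;> simp

theorem mkK_smul (c : ℝ) : c • mkK A w = mkK (c • A) (c • w) := by
  ext i j
  induction j using Fin.lastCases <;> induction i using Fin.lastCases <;> simp

theorem mkK_mul_mkK : mkK A w * mkK B v = mkK (A * B) (w ᵥ* B) := by
  ext i j
  induction j using Fin.lastCases <;> induction i using Fin.lastCases <;>
    simp [mul_apply, vecMul, dotProduct, Fin.sum_univ_castSucc]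

theorem mkK_mulVec_castSucc (x : Fin (s + 1) → ℝ) (i : Fin s) :
    (mkK A w *ᵥ x) i.castSucc = (A *ᵥ (x ∘ Fin.castSucc)) i := by
  simp [mulVec, dotProduct, Fin.sum_univ_castSucc]

theorem mkK_mulVec_last (x : Fin (s + 1) → ℝ) :
    (mkK A w *ᵥ x) (Fin.last s) = w ⬝ᵥ (x ∘ Fin.castSucc) := by
  simp [mulVec, dotProduct, Fin.sum_univ_castSucc]

end mkK

section Bidiagonal

variable {s : ℕ}

def strictLowerOnes (s : ℕ) : Matrix (Fin s) (Fin s) ℝ :=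
  of fun i j => if j < i then 1 else 0

def subdiagOnes (s : ℕ) : Matrix (Fin s) (Fin s) ℝ :=
  of fun i j => if (i : ℕ) = j + 1 then 1 else 0

theorem strictLowerOnes_apply_eq_zero_of_le {i j : Fin s} (hij : i ≤ j) :
    strictLowerOnes s i j = 0 := by
  simp [strictLowerOnes, hij.not_gt]

theorem subdiagOnes_mulVec_apply (v : Fin s → ℝ) (i : Fin s) :
    (subdiagOnes s *ᵥ v) i = if h : 0 < (i : ℕ) then v ⟨(i : ℕ) - 1, by omega⟩ else 0 := by
  simp only [mulVec, dotProduct, subdiagOnes, of_apply, ite_mul, one_mul, zero_mul]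
  split_ifs with h
  · rw [Finset.sum_eq_single ⟨(i : ℕ) - 1, by omega⟩]
    · simp only [if_pos (show (i : ℕ) = (i : ℕ) - 1 + 1 by omega)]
    · intro k _ hk
      exact if_neg fun hik => hk (Fin.ext (by simp only; omega))
    · simp
  · exact Finset.sum_eq_zero fun k _ => if_neg (by omega)

theorem subdiagOnes_mul_apply (M : Matrix (Fin s) (Fin s) ℝ) (i j : Fin s) :
    (subdiagOnes s * M) i j = if h : 0 < (i : ℕ) then M ⟨(i : ℕ) - 1, by omega⟩ j else 0 :=
  subdiagOnes_mulVec_apply (fun k => M k j) i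

theorem subdiagOnes_mulVec_one_apply (i : Fin s) :
    (subdiagOnes s *ᵥ 1) i = if (i : ℕ) = 0 then 0 else 1 := by
  rw [subdiagOnes_mulVec_apply]
  split_ifs <;> first | omega | rfl

theorem vecMul_subdiagOnes_apply (w : Fin s → ℝ) (j : Fin s) :
    (w ᵥ* subdiagOnes s) j = if h : (j : ℕ) + 1 < s then w ⟨j + 1, h⟩ else 0 := by
  simp only [vecMul, dotProduct, subdiagOnes, of_apply, mul_ite, mul_one, mul_zero]
  split_ifs with h
  · rw [Finset.sum_eq_single ⟨(j : ℕ) + 1, h⟩]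
    · simp
    · intro k _ hk
      exact if_neg fun hkj => hk (Fin.ext hkj)
    · simp
  · exact Finset.sum_eq_zero fun k _ => if_neg (by omega)

theorem subdiagOnes_add_subdiagOnes_mul_strictLowerOnes :
    subdiagOnes s + subdiagOnes s * strictLowerOnes s = strictLowerOnes s := by
  ext i j
  rw [Matrix.add_apply, subdiagOnes_mul_apply]
  simp only [subdiagOnes, strictLowerOnes, of_apply, Fin.lt_def]
  split_ifs <;> first | omega | norm_num

theorem one_sub_subdiagOnes_mul_one_add_strictLowerOnes :
    (1 - subdiagOnes s) * (1 + strictLowerOnes s) = 1 := by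
  calc (1 - subdiagOnes s) * (1 + strictLowerOnes s)
      = 1 + (strictLowerOnes s - (subdiagOnes s + subdiagOnes s * strictLowerOnes s)) := by
        noncomm_ring
    _ = 1 := by rw [subdiagOnes_add_subdiagOnes_mul_strictLowerOnes, sub_self, add_zero]

theorem vecMul_one_sub_subdiagOnes_nonneg {w : Fin s → ℝ} (hw : Antitone w) (hw0 : 0 ≤ w) :
    0 ≤ w ᵥ* (1 - subdiagOnes s) := by
  intro j
  rw [vecMul_sub, vecMul_one, Pi.sub_apply, vecMul_subdiagOnes_apply, Pi.zero_apply, sub_nonneg]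
  split_ifs with h
  · exact hw (Fin.mk_le_mk.mpr (Nat.le_succ _))
  · exact hw0 j

theorem vecMul_one_sub_subdiagOnes_dotProduct_one (hs : 0 < s) (w : Fin s → ℝ) :
    w ᵥ* (1 - subdiagOnes s) ⬝ᵥ 1 = w ⟨0, hs⟩ := by
  have hcol : 1 - subdiagOnes s *ᵥ 1 = Pi.single ⟨0, hs⟩ 1 := by
    ext i
    simp only [Pi.sub_apply, subdiagOnes_mulVec_one_apply, Pi.single_apply, Fin.ext_iff]
    split_ifs <;> simp
  rw [← dotProduct_mulVec, sub_mulVec, one_mulVec, hcol, dotProduct_single, mul_one]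

end Bidiagonal

def SSPConditions {n : Type*} [Fintype n] [DecidableEq n] (K : Matrix n n ℝ) (r : ℝ) : Prop :=
  (∀ i j, 0 ≤ (K * (1 + r • K)⁻¹) i j) ∧ ∀ i, ((r • (K * (1 + r • K)⁻¹)) *ᵥ fun _ => 1) i ≤ 1

section SSPERK

variable {s : ℕ}

theorem mkK_mul_inv_one_add_smul {r : ℝ} (hr : r ≠ 0) (w : Fin s → ℝ) :
    mkK (r⁻¹ • strictLowerOnes s) w * (1 + r • mkK (r⁻¹ • strictLowerOnes s) w)⁻¹ =
      mkK (r⁻¹ • subdiagOnes s) (w ᵥ* (1 - subdiagOnes s)) := by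
  set K := mkK (r⁻¹ • strictLowerOnes s) w
  set R := mkK (r⁻¹ • subdiagOnes s) (w ᵥ* (1 - subdiagOnes s))
  have hK : ∀ i j, i ≤ j → K i j = 0 := fun i j hij =>
    mkK_apply_eq_zero_of_le _ _
      (fun i j hij => by simp [strictLowerOnes_apply_eq_zero_of_le hij]) hij
  have hRK : R * (1 + r • K) = K := by
    rw [mul_add, mul_one, mul_smul_comm, mkK_mul_mkK, mkK_smul, mkK_add]
    congr 1
    · rw [smul_mul_smul_comm, smul_smul, mul_inv_cancel_left₀ hr, ← smul_add,
        subdiagOnes_add_subdiagOnes_mul_strictLowerOnes]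
    · rw [vecMul_smul, smul_smul, mul_inv_cancel₀ hr, one_smul, vecMul_vecMul, ← vecMul_add,
        ← mul_one_add, one_sub_subdiagOnes_mul_one_add_strictLowerOnes,
        vecMul_one]
  calc K * (1 + r • K)⁻¹ = R * (1 + r • K) * (1 + r • K)⁻¹ := by rw [hRK]
    _ = R := mul_nonsing_inv_cancel_right _ _ (isUnit_det_one_add_smul K hK r)

theorem sspConditions_mkK_strictLowerOnes (hs : 0 < s) {r : ℝ} (hr : 0 < r) {w : Fin s → ℝ}
    (hw : Antitone w) (hw0 : 0 ≤ w) (hrw : r * w ⟨0, hs⟩ ≤ 1) :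
    SSPConditions (mkK (r⁻¹ • strictLowerOnes s) w) r := by
  rw [SSPConditions, mkK_mul_inv_one_add_smul hr.ne']
  refine ⟨mkK_nonneg _ _ (fun i j => ?_) (vecMul_one_sub_subdiagOnes_nonneg hw hw0), fun i => ?_⟩
  · have hN : 0 ≤ subdiagOnes s i j := by
      simp only [subdiagOnes, of_apply]
      split_ifs <;> norm_num
    exact smul_nonneg (inv_nonneg.mpr hr.le) hN
  · have hone : ((fun _ => 1) ∘ Fin.castSucc : Fin s → ℝ) = 1 := rfl
    rw [smul_mulVec, Pi.smul_apply, smul_eq_mul]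
    induction i using Fin.lastCases with
    | last => rwa [mkK_mulVec_last, hone, vecMul_one_sub_subdiagOnes_dotProduct_one hs]
    | cast i =>
      rw [mkK_mulVec_castSucc, hone, smul_mulVec, Pi.smul_apply, smul_eq_mul,
        mul_inv_cancel_left₀ hr.ne', subdiagOnes_mulVec_one_apply]
      split_ifs <;> norm_num

end SSPERK

section Weights

variable {s : ℕ}

noncomputable def ssperkEmbeddedWeights (s : ℕ) : Fin s → ℝ := fun j =>
  if (j : ℕ) = 0 then ((s : ℝ) + 1) / (s : ℝ) ^ 2
  else if (j : ℕ) = s - 1 then ((s : ℝ) - 1) / (s : ℝ) ^ 2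
  else 1 / (s : ℝ)

theorem ssperkEmbeddedWeights_antitone (hs : 2 ≤ s) : Antitone (ssperkEmbeddedWeights s) := by
  have hs' : (2 : ℝ) ≤ s := by exact_mod_cast hs
  have hsq : (0 : ℝ) < (s : ℝ) ^ 2 := by positivity
  have hmid_le_first : 1 / (s : ℝ) ≤ ((s : ℝ) + 1) / (s : ℝ) ^ 2 := by
    rw [div_le_div_iff₀ (by positivity) hsq]; nlinarith
  have hlast_le_mid : ((s : ℝ) - 1) / (s : ℝ) ^ 2 ≤ 1 / (s : ℝ) := by
    rw [div_le_div_iff₀ hsq (by positivity)]; nlinarith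
  intro i j hij
  have hj : (j : ℕ) < s := j.isLt
  rw [Fin.le_def] at hij
  simp only [ssperkEmbeddedWeights]
  split_ifs <;> first | omega | linarith

theorem ssperkEmbeddedWeights_nonneg (hs : 2 ≤ s) : 0 ≤ ssperkEmbeddedWeights s := by
  have hs' : (2 : ℝ) ≤ s := by exact_mod_cast hs
  intro j
  simp only [ssperkEmbeddedWeights, Pi.zero_apply]
  split_ifs
  · positivity
  · exact div_nonneg (by linarith) (by positivity)
  · positivity

theorem sub_one_mul_ssperkEmbeddedWeights_zero_le_one (hs : 2 ≤ s) :
    ((s : ℝ) - 1) * ssperkEmbeddedWeights s ⟨0, by omega⟩ ≤ 1 := by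
  have hsq : (0 : ℝ) < (s : ℝ) ^ 2 := by positivity
  have hfirst : ssperkEmbeddedWeights s ⟨0, by omega⟩ = ((s : ℝ) + 1) / (s : ℝ) ^ 2 := if_pos rfl
  rw [hfirst, ← mul_div_assoc, div_le_one hsq]
  nlinarith

end Weights

/-- The embedded pair consisting of the SSPERK(s,2) coefficient matrix `A`
(`a_{ij} = 1/(s-1)` for `j < i`) and embedded weights
`b̃₂ = ((s+1)/s², 1/s, …, 1/s, (s-1)/s²)ᵀ` satisfies the SSP conditions at
`r = s - 1`: `K̃(I + (s-1)K̃)⁻¹ ≥ 0` entrywise and `(s-1)K̃(I + (s-1)K̃)⁻¹ e ≤ e`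
componentwise; hence the embedded method has SSP coefficient at least `s - 1`. -/
theorem ssperk_s2_embedded_b2_ssp_conditions
    (s : ℕ) (hs : 2 ≤ s)
    (A : Matrix (Fin s) (Fin s) ℝ)
    (hA : ∀ i j : Fin s, A i j = if (j : ℕ) < (i : ℕ) then 1 / ((s : ℝ) - 1) else 0)
    (bt : Fin s → ℝ)
    (hbt : ∀ j : Fin s, bt j =
      if (j : ℕ) = 0 then ((s : ℝ) + 1) / (s : ℝ) ^ 2
      else if (j : ℕ) = s - 1 then ((s : ℝ) - 1) / (s : ℝ) ^ 2
      else 1 / (s : ℝ)) :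
    (∀ i j : Fin (s + 1),
      0 ≤ (mkK A bt * (1 + ((s : ℝ) - 1) • mkK A bt)⁻¹) i j) ∧
    (∀ i : Fin (s + 1),
      (((s : ℝ) - 1) • (mkK A bt * (1 + ((s : ℝ) - 1) • mkK A bt)⁻¹)).mulVec
        (fun _ => 1) i ≤ 1) := by
  have hr : 0 < (s : ℝ) - 1 := by
    have : (2 : ℝ) ≤ s := by exact_mod_cast hs
    linarith
  have hA' : A = ((s : ℝ) - 1)⁻¹ • strictLowerOnes s := by
    ext i j
    rw [hA]
    simp only [Matrix.smul_apply, strictLowerOnes, of_apply, Fin.lt_def, smul_eq_mul, mul_ite,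
      mul_one, mul_zero, one_div]
  have hbt' : bt = ssperkEmbeddedWeights s := funext hbt
  subst hA' hbt'
  exact sspConditions_mkK_strictLowerOnes (by omega) hr (ssperkEmbeddedWeights_antitone hs)
    (ssperkEmbeddedWeights_nonneg hs) (sub_one_mul_ssperkEmbeddedWeights_zero_le_one hs)
end

section
/- The embedded weight vector b̃₂ = (3/14, 0, 0, 2/7, 0, 0, 0, 3/7, 0, 1/14)ᵀ for the SSPERK(10,4) method satisfies all third-order conditions — b̃₂ᵀe = 1, b̃₂ᵀc = 1/2, b̃₂ᵀc² = 1/3, and b̃₂ᵀ(c²/2 − Ac) = 0 — and violates a fourth-order condition: b̃₂ᵀc³ = 59/252 ≠ 1/4, where A and c are the SSPERK(10,4) coefficient matrix and abscissae. -/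
open Matrix

/-- Coefficient matrix of the optimal SSPERK(10,4) method (zero-indexed):
for `j < i`, the entry is `1/6` if `i ≤ 4` or `j ≥ 5`, and `1/15` otherwise. -/
noncomputable def A104 : Matrix (Fin 10) (Fin 10) ℝ :=
  Matrix.of fun i j =>
    if (j : ℕ) < (i : ℕ) then
      if (i : ℕ) ≤ 4 ∨ 5 ≤ (j : ℕ) then 1/6 else 1/15
    else 0

/-- Abscissae of the optimal SSPERK(10,4) method, `c = A·e`. -/
noncomputable def c104 : Fin 10 → ℝ := ![0, 1/6, 1/3, 1/2, 2/3, 1/3, 1/2, 2/3, 5/6, 1]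

/-- Embedded weight vector for SSPERK(10,4). -/
noncomputable def bt2 : Fin 10 → ℝ := ![3/14, 0, 0, 2/7, 0, 0, 0, 3/7, 0, 1/14]

lemma sum_bt2_mul (f : Fin 10 → ℝ) :
    ∑ j, bt2 j * f j = 3/14 * f 0 + 2/7 * f 3 + 3/7 * f 7 + 1/14 * f 9 := by
  simp [bt2, Fin.sum_univ_succ]
  ring

lemma sum_bt2 : ∑ j, bt2 j = 1 := by
  simpa only [Pi.one_apply, mul_one] using (sum_bt2_mul 1).trans (by norm_num)

lemma A104_mulVec_c104 :
    A104 *ᵥ c104 = ![0, 0, 1/36, 1/12, 1/6, 1/9, 1/6, 1/4, 13/36, 1/2] := by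
  ext i
  fin_cases i <;> simp [A104, c104, mulVec, dotProduct, Fin.sum_univ_succ] <;> norm_num

/-- The embedded weight vector `bt2` for SSPERK(10,4) satisfies all
third-order conditions and violates the fourth-order condition
`wᵀc³ = 1/4`, having `wᵀc³ = 59 / 252`. -/
theorem ssperk104_embedded_bt2_third_order_not_fourth :
    (∑ j : Fin 10, bt2 j = 1) ∧
    (∑ j : Fin 10, bt2 j * c104 j = 1 / 2) ∧
    (∑ j : Fin 10, bt2 j * (c104 j) ^ 2 = 1 / 3) ∧
    (∑ j : Fin 10, bt2 j * ((c104 j) ^ 2 / 2 - A104.mulVec c104 j) = 0) ∧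
    (∑ j : Fin 10, bt2 j * (c104 j) ^ 3 = 59 / 252) ∧
    ((59 / 252 : ℝ) ≠ 1 / 4) := by
  refine ⟨sum_bt2, ?_, ?_, ?_, ?_, by norm_num⟩ <;>
  · simp only [sum_bt2_mul, A104_mulVec_c104]
    simp only [c104, cons_val]
    norm_num
end
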